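/- arXiv:2408.10344 — 4 statements merged into one kernel-verified Lean document; each statement's English description precedes it below -/
import Mathlib

section
/- Let (𝒢, ∂P) be a simple polygonal subdivision graph and let 𝒢̃ be its triangulation, obtained by adding for each non-triangular face F of ℛ(P) a new vertex w_F joined to every vertex of ∂F. Let a, b be two non-adjacent vertices on ∂P. Then EW_{𝒢̃}(Γ̃_{a,b}, ∂P) ≥ EW_𝒢(Γ_{a,b}, ∂P) and EW_{𝒢̃}(Γ̃*_{a,b}, ∂P) ≥ EW_𝒢(Γ*_{a,b}, ∂P). -/
open Set

noncomputable section

namespace DPG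

/-! ### Vertex extremal width -/

/-- A path in a graph: a list of vertices in which consecutive vertices are adjacent,
with no repeated vertices. -/
def IsPathIn {V : Type*} (G : SimpleGraph V) (γ : List V) : Prop :=
  γ.Chain' G.Adj ∧ γ.Nodup

/-- The interior vertices of a path (all but the two endpoints). -/
def interiorVerts {V : Type*} (γ : List V) : List V := γ.tail.dropLast

/-- A path is proper relative to a set `B` of boundary vertices if its endpoints lie in `B`
and its interior vertices avoid `B`. -/
def IsProperPath {V : Type*} (G : SimpleGraph V) (B : Set V) (γ : List V) : Prop :=
  IsPathIn G γ ∧ 2 ≤ γ.length ∧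
    (∀ x ∈ γ.head?, x ∈ B) ∧ (∀ x ∈ γ.getLast?, x ∈ B) ∧
    ∀ x ∈ interiorVerts γ, x ∉ B

/-- The family `Γ_{a,b}` of proper paths connecting `a` and `b`. -/
def connectingPaths {V : Type*} (G : SimpleGraph V) (B : Set V) (a b : V) : Set (List V) :=
  {γ | IsProperPath G B γ ∧ γ.head? = some a ∧ γ.getLast? = some b}

/-- The family of proper paths whose two endpoints satisfy a given separation
predicate `sep` (used for the family `Γ*_{a,b}` of separating paths). -/
def separatingPaths {V : Type*} (G : SimpleGraph V) (B : Set V) (sep : V → V → Prop) :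
    Set (List V) :=
  {γ | IsProperPath G B γ ∧ ∃ u v, γ.head? = some u ∧ γ.getLast? = some v ∧ sep u v}

/-- The length of a path with respect to a vertex metric. -/
def pathLen {V : Type*} (μ : V → ℝ) (γ : List V) : ℝ := (γ.map μ).sum

/-- A vertex metric `μ` is `Γ`-admissible relative to `W` if it is nonnegative,
every path in `Γ` has `μ`-length at least 1, and `μ` vanishes on `W`. -/
def Admissible {V : Type*} (μ : V → ℝ) (Γ : Set (List V)) (W : Set V) : Prop :=
  (∀ v, 0 ≤ μ v) ∧ (∀ γ ∈ Γ, 1 ≤ pathLen μ γ) ∧ ∀ v ∈ W, μ v = 0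

/-- The area of a vertex metric. -/
def vertexArea {V : Type*} [Fintype V] (μ : V → ℝ) : ℝ := ∑ v, μ v ^ 2

/-- The relative vertex extremal width `EW(Γ, W)`. -/
def EW {V : Type*} [Fintype V] (Γ : Set (List V)) (W : Set V) : ℝ :=
  sInf {A | ∃ μ, Admissible μ Γ W ∧ A = vertexArea μ}

/-- An extremal admissible vertex metric. -/
def IsExtremal {V : Type*} [Fintype V] (μ : V → ℝ) (Γ : Set (List V)) (W : Set V) : Prop :=
  Admissible μ Γ W ∧ vertexArea μ = EW Γ W

/-! ### Plane graphs -/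

/-- A (simple) plane graph: a simple graph drawn in the plane `ℂ`, with vertices at
distinct points and edges realized by arcs which meet only at common endpoints. -/
structure PlaneGraph (V : Type*) where
  G : SimpleGraph V
  pos : V → ℂ
  pos_inj : Function.Injective pos
  arc : V → V → Set ℂ
  arc_symm : ∀ u v, arc u v = arc v u
  arc_param : ∀ ⦃u v⦄, G.Adj u v → ∃ f : ℝ → ℂ, ContinuousOn f (Icc 0 1) ∧
      InjOn f (Icc 0 1) ∧ f 0 = pos u ∧ f 1 = pos v ∧ arc u v = f '' Icc 0 1
  arc_meet : ∀ ⦃u v u' v'⦄, G.Adj u v → G.Adj u' v' →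
      ¬((u = u' ∧ v = v') ∨ (u = v' ∧ v = u')) →
      arc u v ∩ arc u' v' ⊆ range pos
  arc_vertex : ∀ ⦃u v⦄, G.Adj u v → ∀ w, pos w ∈ arc u v → w = u ∨ w = v

/-- The subset of the plane occupied by (the drawing of) a plane graph. -/
def PlaneGraph.image {V : Type*} (Γ : PlaneGraph V) : Set ℂ :=
  range Γ.pos ∪ ⋃ (u) (v) (_ : Γ.G.Adj u v), Γ.arc u v

/-! ### Polygonal subdivision graphs -/

/-- A (simple) polygonal subdivision graph `(𝒢, ∂P)`: the 1-skeleton of a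
polygonal subdivision `ℛ(P)` of a polygon `P`, drawn in the plane.  The boundary
`∂P` is a cycle `bd 0, bd 1, …` of length `m ≥ 3` whose arcs form the frontier of the
region `P`; the `2`-cells of the subdivision are the faces `face j`, which are exactly
the connected components of `int P` minus the drawing of the graph, each bounded by the
cycle `fbd j 0, fbd j 1, …` of length `fm j` in the graph. -/
structure PolygonalSubdivision (V : Type*) extends PlaneGraph V where
  m : ℕ
  three_le_m : 3 ≤ m
  bd : ZMod m → V
  bd_inj : Function.Injective bd
  bd_adj : ∀ i, G.Adj (bd i) (bd (i + 1))
  P : Set ℂ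
  P_compact : IsCompact P
  P_regular : P = closure (interior P)
  image_subset_P : PlaneGraph.image toPlaneGraph ⊆ P
  frontier_P : frontier P = ⋃ i, arc (bd i) (bd (i + 1))
  nf : ℕ
  two_le_nf : 2 ≤ nf
  fm : Fin nf → ℕ
  three_le_fm : ∀ j, 3 ≤ fm j
  fbd : (j : Fin nf) → ZMod (fm j) → V
  fbd_inj : ∀ j, Function.Injective (fbd j)
  fbd_adj : ∀ j i, G.Adj (fbd j i) (fbd j (i + 1))
  face : Fin nf → Set ℂ
  face_inj : Function.Injective face
  face_component : ∀ j, ∃ x ∈ interior P \ PlaneGraph.image toPlaneGraph,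
      face j = connectedComponentIn (interior P \ PlaneGraph.image toPlaneGraph) x
  face_cover : interior P \ PlaneGraph.image toPlaneGraph ⊆ ⋃ j, face j
  face_frontier : ∀ j, frontier (face j) = ⋃ i, arc (fbd j i) (fbd j (i + 1))

namespace PolygonalSubdivision

variable {V : Type*}

/-- The set of vertices on the boundary polygon `∂P`. -/
def bdryVerts (S : PolygonalSubdivision V) : Set V := range S.bd

/-- The set of vertices on the boundary of the face `j`. -/
def faceVerts (S : PolygonalSubdivision V) (j : Fin S.nf) : Set V := range (S.fbd j)

/-- The subdivision complexity `𝒞(𝒢, ∂P)`: the maximal number of vertices of a face. -/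
def complexity (S : PolygonalSubdivision V) : ℕ := Finset.univ.sup S.fm

/-- Two boundary vertices `u, v` lie in the two different connected components of
`∂P − {a, b}`. -/
def Separates (S : PolygonalSubdivision V) (a b u v : V) : Prop :=
  u ∈ S.bdryVerts ∧ v ∈ S.bdryVerts ∧ u ≠ a ∧ u ≠ b ∧ v ≠ a ∧ v ≠ b ∧
    connectedComponentIn (frontier S.P \ {S.pos a, S.pos b}) (S.pos u) ≠
      connectedComponentIn (frontier S.P \ {S.pos a, S.pos b}) (S.pos v)

/-- The family `Γ_{a,b}` of proper paths in `𝒢` connecting `a` and `b`. -/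
def connFam (S : PolygonalSubdivision V) (a b : V) : Set (List V) :=
  connectingPaths S.G S.bdryVerts a b

/-- The family `Γ*_{a,b}` of proper paths in `𝒢` separating `a` and `b`, i.e. connecting
the two components of `∂P − {a, b}`. -/
def sepFam (S : PolygonalSubdivision V) (a b : V) : Set (List V) :=
  separatingPaths S.G S.bdryVerts (S.Separates a b)

end PolygonalSubdivision

end DPG

namespace DPG

open PolygonalSubdivision

variable {V : Type*}

/-- The non-triangular faces of a polygonal subdivision. -/
abbrev NTFace (S : PolygonalSubdivision V) : Type _ := {j : Fin S.nf // 4 ≤ S.fm j}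

/-- The underlying relation of the triangulation `𝒢̃`: the original adjacency, together
with an edge between the new vertex `w_F` of each non-triangular face `F` and every
vertex of `∂F`. -/
def tildeRel (S : PolygonalSubdivision V) :
    V ⊕ NTFace S → V ⊕ NTFace S → Prop
  | Sum.inl u, Sum.inl v => S.G.Adj u v
  | Sum.inl u, Sum.inr f => u ∈ S.faceVerts f.1
  | Sum.inr f, Sum.inl u => u ∈ S.faceVerts f.1
  | Sum.inr _, Sum.inr _ => False

/-- The triangulation `𝒢̃` of a polygonal subdivision graph `𝒢`, obtained by adding a new
vertex `w_F` for each non-triangular face `F`, joined to every vertex of `∂F`. -/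
def tildeGraph (S : PolygonalSubdivision V) : SimpleGraph (V ⊕ NTFace S) :=
  SimpleGraph.fromRel (tildeRel S)

/-- The boundary vertex set of `𝒢̃` (the boundary vertices of `𝒢`). -/
def tildeBdry (S : PolygonalSubdivision V) : Set (V ⊕ NTFace S) :=
  Sum.inl '' S.bdryVerts

/-- The family `Γ̃_{a,b}` of proper paths in `𝒢̃` connecting `a` and `b`. -/
def tildeConnFam (S : PolygonalSubdivision V) (a b : V) : Set (List (V ⊕ NTFace S)) :=
  connectingPaths (tildeGraph S) (tildeBdry S) (Sum.inl a) (Sum.inl b)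

/-- The family `Γ̃*_{a,b}` of proper paths in `𝒢̃` separating `a` and `b`. -/
def tildeSepFam (S : PolygonalSubdivision V) (a b : V) : Set (List (V ⊕ NTFace S)) :=
  separatingPaths (tildeGraph S) (tildeBdry S)
    (fun x y => ∃ u v, x = Sum.inl u ∧ y = Sum.inl v ∧ S.Separates a b u v)

end DPG

/-!
An admissible metric on `𝒢̃` restricts to an admissible metric on `𝒢` of no larger area, because
`𝒢` is an induced subgraph of `𝒢̃` with the same boundary, so every proper path of `𝒢` is one of
`𝒢̃`. Conversely, extending an admissible metric on `𝒢` by `1` at the new vertices gives an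
admissible metric on `𝒢̃`, so the two widths take the junk value `0` only together.
-/

theorem List.exists_eq_map_inl_or_inr_mem {α β : Type*} (γ : List (α ⊕ β)) :
    (∃ δ : List α, γ = δ.map Sum.inl) ∨ ∃ f, Sum.inr f ∈ γ := by
  induction γ with
  | nil => exact Or.inl ⟨[], rfl⟩
  | cons x γ ih =>
    rcases x with u | f
    · rcases ih with ⟨δ, rfl⟩ | ⟨f, hf⟩
      · exact Or.inl ⟨u :: δ, rfl⟩
      · exact Or.inr ⟨f, List.mem_cons_of_mem _ hf⟩
    · exact Or.inr ⟨f, List.mem_cons_self⟩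

namespace DPG

lemma pathLen_map {V V' : Type*} (μ : V' → ℝ) (f : V → V') (γ : List V) :
    pathLen μ (γ.map f) = pathLen (μ ∘ f) γ := by
  simp [pathLen, List.map_map]

section ExtremalWidth

variable {V V' : Type*} [Fintype V] [Fintype V']

lemma vertexArea_nonneg (μ : V → ℝ) : 0 ≤ vertexArea μ :=
  Finset.sum_nonneg fun _ _ => sq_nonneg _

lemma EW_le_vertexArea {μ : V → ℝ} {Γ : Set (List V)} {W : Set V} (hμ : Admissible μ Γ W) :
    EW Γ W ≤ vertexArea μ :=
  csInf_le ⟨0, by rintro _ ⟨ν, -, rfl⟩; exact vertexArea_nonneg ν⟩ ⟨μ, hμ, rfl⟩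

lemma EW_eq_zero_of_not_admissible {Γ : Set (List V)} {W : Set V}
    (h : ¬ ∃ μ, Admissible μ Γ W) : EW Γ W = 0 := by
  have hempty : {A | ∃ μ, Admissible μ Γ W ∧ A = vertexArea μ} = ∅ :=
    Set.eq_empty_of_forall_notMem fun _ ⟨μ, hμ, _⟩ => h ⟨μ, hμ⟩
  rw [EW, hempty, Real.sInf_empty]

/-- `hext` is needed because `EW` takes the junk value `0` when there is no admissible metric. -/
lemma EW_le_EW_of_admissible {Γ : Set (List V)} {W : Set V} {Γ' : Set (List V')} {W' : Set V'}
    (hext : ∀ μ, Admissible μ Γ W → ∃ μ', Admissible μ' Γ' W')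
    (hres : ∀ μ', Admissible μ' Γ' W' →
      ∃ μ, Admissible μ Γ W ∧ vertexArea μ ≤ vertexArea μ') :
    EW Γ W ≤ EW Γ' W' := by
  by_cases h : ∃ μ', Admissible μ' Γ' W'
  · obtain ⟨μ₀, hμ₀⟩ := h
    refine le_csInf ⟨_, μ₀, hμ₀, rfl⟩ ?_
    rintro _ ⟨μ', hμ', rfl⟩
    obtain ⟨μ, hμ, harea⟩ := hres μ' hμ'
    exact (EW_le_vertexArea hμ).trans harea
  · rw [EW_eq_zero_of_not_admissible h,
      EW_eq_zero_of_not_admissible fun ⟨μ, hμ⟩ => h (hext μ hμ)]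

end ExtremalWidth

section AddVertices

variable {V F : Type*} {Γ : Set (List (V ⊕ F))} {W : Set V}

lemma admissible_comp_inl {μ : V ⊕ F → ℝ} (hμ : Admissible μ Γ (Sum.inl '' W)) :
    Admissible (μ ∘ Sum.inl) (List.map Sum.inl ⁻¹' Γ) W :=
  ⟨fun _ => hμ.1 _, fun γ hγ => pathLen_map μ Sum.inl γ ▸ hμ.2.1 _ hγ,
    fun v hv => hμ.2.2 _ ⟨v, hv, rfl⟩⟩

lemma admissible_elim_one {μ : V → ℝ} (hμ : Admissible μ (List.map Sum.inl ⁻¹' Γ) W) :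
    Admissible (Sum.elim μ 1) Γ (Sum.inl '' W) := by
  have hnonneg : ∀ x, 0 ≤ Sum.elim μ (1 : F → ℝ) x := by
    rintro (v | f)
    exacts [hμ.1 v, zero_le_one]
  refine ⟨hnonneg, fun γ hγ => ?_, by rintro _ ⟨v, hv, rfl⟩; exact hμ.2.2 v hv⟩
  rcases List.exists_eq_map_inl_or_inr_mem γ with ⟨δ, rfl⟩ | ⟨f, hf⟩
  · rw [pathLen_map, Sum.elim_comp_inl]
    exact hμ.2.1 δ hγ
  · exact List.single_le_sum (List.forall_mem_map.2 fun x _ => hnonneg x) _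
      (List.mem_map_of_mem hf)

lemma vertexArea_comp_inl_le [Fintype V] [Fintype F] (μ : V ⊕ F → ℝ) :
    vertexArea (μ ∘ Sum.inl) ≤ vertexArea μ := by
  rw [vertexArea, vertexArea, Fintype.sum_sum_type]
  exact le_add_of_nonneg_right (vertexArea_nonneg (μ ∘ Sum.inr))

lemma EW_preimage_map_inl_le [Fintype V] [Fintype F] :
    EW (List.map Sum.inl ⁻¹' Γ) W ≤ EW Γ (Sum.inl '' W) :=
  EW_le_EW_of_admissible (fun _ hμ => ⟨_, admissible_elim_one hμ⟩)
    fun μ hμ => ⟨_, admissible_comp_inl hμ, vertexArea_comp_inl_le μ⟩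

end AddVertices

section ProperPaths

variable {V V' : Type*} {G : SimpleGraph V} {G' : SimpleGraph V'} {B : Set V} {B' : Set V'}

lemma interiorVerts_map (f : V → V') (γ : List V) :
    interiorVerts (γ.map f) = (interiorVerts γ).map f := by
  simp [interiorVerts, ← List.map_tail, ← List.map_dropLast]

lemma isProperPath_map_iff (f : G ↪g G') (hB : f ⁻¹' B' = B) (γ : List V) :
    IsProperPath G' B' (γ.map f) ↔ IsProperPath G B γ := by
  subst hB
  simp [IsProperPath, IsPathIn, List.Chain', List.isChain_map, interiorVerts_map,
    List.nodup_map_iff f.injective]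

lemma preimage_map_connectingPaths (f : G ↪g G') (hB : f ⁻¹' B' = B) (a b : V) :
    List.map f ⁻¹' connectingPaths G' B' (f a) (f b) = connectingPaths G B a b := by
  ext γ
  simp [connectingPaths, isProperPath_map_iff f hB, f.injective.eq_iff]

lemma preimage_map_separatingPaths (f : G ↪g G') (hB : f ⁻¹' B' = B)
    {sep : V → V → Prop} {sep' : V' → V' → Prop} (hsep : ∀ u v, sep' (f u) (f v) ↔ sep u v) :
    List.map f ⁻¹' separatingPaths G' B' sep' = separatingPaths G B sep := by
  ext γ
  simp [separatingPaths, isProperPath_map_iff f hB, hsep]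

end ProperPaths

namespace PolygonalSubdivision

variable {V : Type*} (S : PolygonalSubdivision V)

def inlEmbedding : S.G ↪g tildeGraph S where
  toEmbedding := Function.Embedding.inl
  map_rel_iff' {u v} := by
    simp only [tildeGraph, SimpleGraph.fromRel_adj, tildeRel, Function.Embedding.inl_apply,
      ne_eq, Sum.inl.injEq, S.G.adj_comm v u, or_self]
    exact ⟨And.right, fun h => ⟨h.ne, h⟩⟩

lemma preimage_inlEmbedding_tildeBdry : S.inlEmbedding ⁻¹' tildeBdry S = S.bdryVerts :=
  Set.preimage_image_eq _ Sum.inl_injective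

lemma connFam_eq_preimage (a b : V) :
    S.connFam a b = List.map Sum.inl ⁻¹' tildeConnFam S a b :=
  (preimage_map_connectingPaths S.inlEmbedding S.preimage_inlEmbedding_tildeBdry a b).symm

lemma sepFam_eq_preimage (a b : V) :
    S.sepFam a b = List.map Sum.inl ⁻¹' tildeSepFam S a b :=
  (preimage_map_separatingPaths S.inlEmbedding S.preimage_inlEmbedding_tildeBdry
    fun u v => by simp [inlEmbedding]).symm

end PolygonalSubdivision

end DPG

open DPG

theorem EW_le_EW_triangulation_general
    (V : Type) [Fintype V] (S : DPG.PolygonalSubdivision V)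
    (a b : V) :
    EW (S.connFam a b) S.bdryVerts ≤ EW (tildeConnFam S a b) (tildeBdry S) ∧
    EW (S.sepFam a b) S.bdryVerts ≤ EW (tildeSepFam S a b) (tildeBdry S) := by
  rw [S.connFam_eq_preimage, S.sepFam_eq_preimage]
  exact ⟨EW_preimage_map_inl_le, EW_preimage_map_inl_le⟩

/-- **The triangulation only increases extremal width** (Lemma 3.7).
Let `(𝒢, ∂P)` be a simple polygonal subdivision graph and `𝒢̃` its triangulation.  For any
two non-adjacent vertices `a, b` on `∂P`,
`EW_{𝒢̃}(Γ̃_{a,b}, ∂P) ≥ EW_𝒢(Γ_{a,b}, ∂P)` and `EW_{𝒢̃}(Γ̃*_{a,b}, ∂P) ≥ EW_𝒢(Γ*_{a,b}, ∂P)`. -/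
theorem EW_le_EW_triangulation
    (V : Type) [Fintype V] (S : DPG.PolygonalSubdivision V)
    (a b : V) (ha : a ∈ S.bdryVerts) (hb : b ∈ S.bdryVerts)
    (hab : a ≠ b) (hnadj : ¬ S.G.Adj a b) :
    EW (S.connFam a b) S.bdryVerts ≤ EW (tildeConnFam S a b) (tildeBdry S) ∧
    EW (S.sepFam a b) S.bdryVerts ≤ EW (tildeSepFam S a b) (tildeBdry S) :=
  EW_le_EW_triangulation_general V S a b
end
end

section
/- Let (𝒢, ∂P) be a simple polygonal subdivision graph, 𝒢_r the graph obtained by successively adding a vertex w_{v,F} for each vertex v of 𝒢 and each non-triangular face F of the subdivision adjacent to v (joined to v and to the two neighbours of v on ∂F), and 𝒢̃ the triangulation obtained from 𝒢 by adding one vertex w_F per non-triangular face F joined to all vertices of ∂F. Let q: 𝒢_r → 𝒢̃ be the natural quotient map that is the identity on vertices of 𝒢 and collapses, for each non-triangular face F, all vertices w_{v,F} to the single vertex w_F. Then for every connected subgraph X of 𝒢̃, the preimage q⁻¹(X) is a connected subgraph of 𝒢_r. -/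
/-!
Every edge of `𝒢̃` lifts to an edge of `𝒢_r`, and every fibre of `q` is connected: the fibre
over `w_F` is the cycle of the vertices `w_{v,F}`, consecutive along `∂F`, and every other fibre
is a single vertex. A walk in `X` therefore lifts, fibre by fibre and edge by edge, to a walk
in `q⁻¹(X)`.
-/

open Set

noncomputable section

namespace DPG

open PolygonalSubdivision

variable {V : Type*} [Fintype V]

/-- Index type for the vertices `w_{v,F}` added in the staged subdivision: pairs of a
vertex index `i` (the vertex `v = vord i`) and a non-triangular face `F` adjacent to `v`. -/
abbrev WIdx (S : PolygonalSubdivision V) (vord : Fin (Fintype.card V) ≃ V) : Type _ :=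
  {p : Fin (Fintype.card V) × Fin S.nf // 4 ≤ S.fm p.2 ∧ vord p.1 ∈ S.faceVerts p.2}

/-- `u` is immediately followed by `v` on the boundary cycle of the face `j`. -/
def ConsecOn (S : PolygonalSubdivision V) (j : Fin S.nf) (u v : V) : Prop :=
  ∃ i : ZMod (S.fm j), S.fbd j i = u ∧ S.fbd j (i + 1) = v

/-- The underlying relation of the staged graph `𝒢_k`.  A vertex `w_{v_i, F}` is present
once `i < k`; it is joined to `v_i`, to the (unprocessed) neighbours of `v_i` on `∂F` with
larger label, and to the vertices `w_{v_j, F}` for `v_j` a neighbour of `v_i` on `∂F`. -/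
def stageRel (S : PolygonalSubdivision V) (vord : Fin (Fintype.card V) ≃ V) (k : ℕ) :
    V ⊕ WIdx S vord → V ⊕ WIdx S vord → Prop
  | Sum.inl u, Sum.inl v => S.G.Adj u v
  | Sum.inl _, Sum.inr _ => False
  | Sum.inr p, Sum.inl u => (p.1.1 : ℕ) < k ∧
      (u = vord p.1.1 ∨
        ((ConsecOn S p.1.2 (vord p.1.1) u ∨ ConsecOn S p.1.2 u (vord p.1.1)) ∧
          p.1.1 < vord.symm u))
  | Sum.inr p, Sum.inr q => (p.1.1 : ℕ) < k ∧ (q.1.1 : ℕ) < k ∧ p.1.2 = q.1.2 ∧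
      (ConsecOn S p.1.2 (vord p.1.1) (vord q.1.1) ∨ ConsecOn S p.1.2 (vord q.1.1) (vord p.1.1))

/-- The staged graph `𝒢_k` (with `𝒢_0 = 𝒢`), obtained from `𝒢_{k-1}` by adding, in each
non-triangular face `F` adjacent to `v_k`, a new vertex `w_{v_k,F}` joined to `v_k` and to
the two neighbours of `v_k` on the boundary of the current face `F`. -/
def stageGraph (S : PolygonalSubdivision V) (vord : Fin (Fintype.card V) ≃ V) (k : ℕ) :
    SimpleGraph (V ⊕ WIdx S vord) :=
  SimpleGraph.fromRel (stageRel S vord k)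

/-- The vertex set `𝒱_k` of `𝒢_k`. -/
def activeSet (S : PolygonalSubdivision V) (vord : Fin (Fintype.card V) ≃ V) (k : ℕ) :
    Set (V ⊕ WIdx S vord) :=
  {x | ∀ p, x = Sum.inr p → (p.1.1 : ℕ) < k}

end DPG

namespace DPG

variable {V : Type*} [Fintype V]

/-- The natural quotient map `q : 𝒢_r → 𝒢̃`, which is the identity on the vertices of `𝒢`
and collapses each vertex `w_{v,F}` to the vertex `w_F` of the triangulation. -/
def qmap (S : PolygonalSubdivision V) (vord : Fin (Fintype.card V) ≃ V) :
    V ⊕ WIdx S vord → V ⊕ NTFace S :=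
  Sum.map id (fun p => ⟨p.1.2, p.2.1⟩)

/-- The subgraph of `G` induced on a set `s` of vertices. -/
def inducedSub {T : Type*} (G : SimpleGraph T) (s : Set T) : G.Subgraph where
  verts := s
  Adj x y := x ∈ s ∧ y ∈ s ∧ G.Adj x y
  adj_sub h := h.2.2
  edge_vert h := h.1
  symm := ⟨fun x y h => ⟨h.2.1, h.1, h.2.2.symm⟩⟩

end DPG

namespace SimpleGraph

variable {α β : Type*} {G : SimpleGraph α} {H : SimpleGraph β}

lemma induce_range_preconnected_of_adj_add_one {n : ℕ} [NeZero n] {g : ZMod n → α}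
    (h : ∀ i, G.Adj (g i) (g (i + 1))) : (G.induce (range g)).Preconnected := by
  have reach_from_zero : ∀ k : ℕ,
      (G.induce (range g)).Reachable ⟨g 0, mem_range_self 0⟩ ⟨g k, mem_range_self _⟩ := by
    intro k
    induction k with
    | zero => simp
    | succ k ih =>
      have hadj : (G.induce (range g)).Adj ⟨g k, mem_range_self _⟩
          ⟨g (k + 1), mem_range_self _⟩ := h k
      exact ih.trans (by simpa only [Nat.cast_succ] using hadj.reachable)
  rintro ⟨_, i, rfl⟩ ⟨_, j, rfl⟩
  have hi := reach_from_zero i.val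
  have hj := reach_from_zero j.val
  simp only [ZMod.natCast_zmod_val] at hi hj
  exact hi.symm.trans hj

lemma Connected.induce_preimage {f : α → β} (hf : Function.Surjective f)
    (hfib : ∀ b, (G.induce (f ⁻¹' {b})).Preconnected)
    (hlift : ∀ ⦃a b⦄, H.Adj a b → ∃ x y, f x = a ∧ f y = b ∧ G.Adj x y)
    {t : Set β} (ht : (H.induce t).Connected) : (G.induce (f ⁻¹' t)).Connected := by
  have reach_fiber : ∀ {x y : α} (hx : f x ∈ t) (hxy : f x = f y),
      (G.induce (f ⁻¹' t)).Reachable ⟨x, hx⟩ ⟨y, mem_preimage.2 (hxy ▸ hx)⟩ :=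
    fun {x y} hx hxy => (hfib (f x) ⟨x, rfl⟩ ⟨y, hxy.symm⟩).map
      (induceHomOfLE G (preimage_mono (singleton_subset_iff.mpr hx))).toHom
  have reach_walk : ∀ {a b : t} (_ : (H.induce t).Walk a b) {x y : α} (hx : f x = a)
      (hy : f y = b), (G.induce (f ⁻¹' t)).Reachable ⟨x, mem_preimage.2 (hx ▸ a.2)⟩
        ⟨y, mem_preimage.2 (hy ▸ b.2)⟩ := by
    intro a b p
    induction p with
    | nil => exact fun hx hy => reach_fiber _ (hx.trans hy.symm)
    | @cons a c _ hac _ ih =>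
      intro x y hx hy
      obtain ⟨x', y', hx', hy', hxy'⟩ := hlift hac
      replace hx' : f x' = a := hx'
      replace hy' : f y' = c := hy'
      have hstep : (G.induce (f ⁻¹' t)).Adj ⟨x', mem_preimage.2 (hx' ▸ a.2)⟩
          ⟨y', mem_preimage.2 (hy' ▸ c.2)⟩ := hxy'
      exact ((reach_fiber _ (hx.trans hx'.symm)).trans hstep.reachable).trans (ih hy' hy)
  obtain ⟨⟨b, hb⟩⟩ := ht.nonempty
  obtain ⟨z, rfl⟩ := hf b
  have : Nonempty (f ⁻¹' t) := ⟨⟨z, hb⟩⟩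
  refine Connected.mk ?_
  rintro ⟨x, hx⟩ ⟨y, hy⟩
  obtain ⟨p⟩ := ht.preconnected ⟨f x, hx⟩ ⟨f y, hy⟩
  exact reach_walk p rfl rfl

end SimpleGraph

namespace DPG

open PolygonalSubdivision

lemma inducedSub_eq_induce_top {T : Type*} (G : SimpleGraph T) (s : Set T) :
    inducedSub G s = (⊤ : G.Subgraph).induce s := rfl

variable {V : Type*} [Fintype V] (S : PolygonalSubdivision V) (vord : Fin (Fintype.card V) ≃ V)

/-- The vertex `w_{v,F}` of `𝒢_r` for the vertex `v = fbd F i` of the face `F`. -/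
def wVert (F : NTFace S) (i : ZMod (S.fm F.1)) : V ⊕ WIdx S vord :=
  Sum.inr ⟨(vord.symm (S.fbd F.1 i), F.1), F.2, by simp [faceVerts]⟩

lemma qmap_wVert (F : NTFace S) (i : ZMod (S.fm F.1)) :
    qmap S vord (wVert S vord F i) = Sum.inr F := rfl

lemma qmap_surjective : Function.Surjective (qmap S vord) := by
  rintro (u | F)
  · exact ⟨Sum.inl u, rfl⟩
  · exact ⟨wVert S vord F 0, rfl⟩

lemma stageGraph_adj_inl {u v : V} (h : S.G.Adj u v) :
    (stageGraph S vord (Fintype.card V)).Adj (Sum.inl u) (Sum.inl v) :=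
  (SimpleGraph.fromRel_adj _ _ _).2 ⟨by simpa using h.ne, Or.inl h⟩

lemma wVert_adj_fbd (F : NTFace S) (i : ZMod (S.fm F.1)) :
    (stageGraph S vord (Fintype.card V)).Adj (wVert S vord F i) (Sum.inl (S.fbd F.1 i)) :=
  (SimpleGraph.fromRel_adj _ _ _).2
    ⟨by simp [wVert], Or.inl ⟨Fin.is_lt _, Or.inl (vord.apply_symm_apply _).symm⟩⟩

lemma wVert_adj_add_one (F : NTFace S) (i : ZMod (S.fm F.1)) :
    (stageGraph S vord (Fintype.card V)).Adj (wVert S vord F i) (wVert S vord F (i + 1)) := by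
  have : Fact (1 < S.fm F.1) := ⟨by have := F.2; omega⟩
  have hne : S.fbd F.1 i ≠ S.fbd F.1 (i + 1) :=
    (S.fbd_inj F.1).ne (left_ne_add.mpr one_ne_zero)
  refine (SimpleGraph.fromRel_adj _ _ _).2 ⟨by simp [wVert, hne], Or.inl ?_⟩
  exact ⟨Fin.is_lt _, Fin.is_lt _, rfl,
    Or.inl ⟨i, (vord.apply_symm_apply _).symm, (vord.apply_symm_apply _).symm⟩⟩

lemma qmap_preimage_inl (u : V) : qmap S vord ⁻¹' {Sum.inl u} = {Sum.inl u} := by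
  ext (v | p) <;> simp [qmap]

lemma qmap_preimage_inr (F : NTFace S) :
    qmap S vord ⁻¹' {Sum.inr F} = range (wVert S vord F) := by
  ext x
  refine ⟨fun hx => ?_, by rintro ⟨i, rfl⟩; exact qmap_wVert S vord F i⟩
  rcases x with v | ⟨⟨k, j⟩, hj, i, hi⟩
  · simp [qmap] at hx
  · obtain rfl : (⟨j, hj⟩ : NTFace S) = F := by simpa [qmap] using hx
    exact ⟨i, by simp [wVert, hi]⟩

lemma qmap_fiber_preconnected (b : V ⊕ NTFace S) :
    ((stageGraph S vord (Fintype.card V)).induce (qmap S vord ⁻¹' {b})).Preconnected := by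
  rcases b with u | F
  · rw [qmap_preimage_inl]
    exact SimpleGraph.Preconnected.of_subsingleton
  · have : NeZero (S.fm F.1) := ⟨by have := F.2; omega⟩
    rw [qmap_preimage_inr]
    exact SimpleGraph.induce_range_preconnected_of_adj_add_one (wVert_adj_add_one S vord F)

lemma exists_stageGraph_adj_of_tildeRel {a b : V ⊕ NTFace S} (h : tildeRel S a b) :
    ∃ x y, qmap S vord x = a ∧ qmap S vord y = b ∧
      (stageGraph S vord (Fintype.card V)).Adj x y := by
  rcases a with u | F <;> rcases b with v | F'
  · exact ⟨_, _, rfl, rfl, stageGraph_adj_inl S vord h⟩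
  · obtain ⟨i, rfl⟩ := h
    exact ⟨_, _, rfl, qmap_wVert S vord F' i, (wVert_adj_fbd S vord F' i).symm⟩
  · obtain ⟨i, rfl⟩ := h
    exact ⟨_, _, qmap_wVert S vord F i, rfl, wVert_adj_fbd S vord F i⟩
  · exact h.elim

lemma exists_stageGraph_adj_of_tildeGraph_adj ⦃a b : V ⊕ NTFace S⦄
    (h : (tildeGraph S).Adj a b) :
    ∃ x y, qmap S vord x = a ∧ qmap S vord y = b ∧
      (stageGraph S vord (Fintype.card V)).Adj x y := by
  rcases (SimpleGraph.fromRel_adj _ _ _).1 h with ⟨-, h | h⟩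
  · exact exists_stageGraph_adj_of_tildeRel S vord h
  · obtain ⟨x, y, hx, hy, hxy⟩ := exists_stageGraph_adj_of_tildeRel S vord h
    exact ⟨y, x, hy, hx, hxy.symm⟩

end DPG

open DPG

/-- **Connectedness of preimages under the collapsing map** (Lemma 3.8).
Let `q : 𝒢_r → 𝒢̃` be the natural quotient map collapsing the vertices `w_{v,F}` to `w_F`.
Then for every connected subgraph `X` of `𝒢̃`, the preimage `q⁻¹(X)` (the subgraph of
`𝒢_r` induced on the union of the fibers of the vertices of `X`) is a connected subgraph
of `𝒢_r`. -/
theorem preimage_connected_subgraph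
    (V : Type) [Fintype V] (S : DPG.PolygonalSubdivision V)
    (vord : Fin (Fintype.card V) ≃ V)
    (X : (tildeGraph S).Subgraph) (hX : X.Connected) :
    (inducedSub (stageGraph S vord (Fintype.card V))
      (qmap S vord ⁻¹' X.verts)).Connected := by
  rw [inducedSub_eq_induce_top, ← SimpleGraph.connected_induce_iff]
  exact hX.induce_verts.induce_preimage (qmap_surjective S vord) (qmap_fiber_preconnected S vord)
    (exists_stageGraph_adj_of_tildeGraph_adj S vord)
end
end

section
/- There exists a constant A₁ > 0 such that for all θ ∈ [0, 2π], (θ − sin θ)/2 ≥ A₁ (1 − cos(θ/2))². -/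
/-! With `φ = θ / 2` the area is `φ - sin φ cos φ ≥ φ - sin φ`, since `sin φ ≥ 0` on `[0, π]`.
The function `φ - sin φ - (1 - cos φ)² / 2` vanishes at `0` and has derivative
`(1 - cos φ)(1 - sin φ) ≥ 0`, so `A₁ = 1 / 2` works. -/

open Real

namespace Real

lemma monotone_sub_sin_sub_sq_one_sub_cos_div_two :
    Monotone fun x : ℝ => x - sin x - (1 - cos x) ^ 2 / 2 := by
  have hderiv (x : ℝ) : HasDerivAt (fun x : ℝ => x - sin x - (1 - cos x) ^ 2 / 2)
      ((1 - cos x) * (1 - sin x)) x := by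
    refine (((hasDerivAt_id' x).fun_sub (hasDerivAt_sin x)).fun_sub
      ((((hasDerivAt_const x 1).fun_sub (hasDerivAt_cos x)).fun_pow 2).div_const 2)).congr_deriv ?_
    push_cast
    ring
  refine monotone_of_deriv_nonneg (fun x => (hderiv x).differentiableAt) fun x => ?_
  rw [(hderiv x).deriv]
  exact mul_nonneg (sub_nonneg.2 (cos_le_one x)) (sub_nonneg.2 (sin_le_one x))

lemma sq_one_sub_cos_div_two_le_sub_sin {x : ℝ} (hx : 0 ≤ x) :
    (1 - cos x) ^ 2 / 2 ≤ x - sin x := by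
  have := monotone_sub_sin_sub_sq_one_sub_cos_div_two hx
  simp only [sin_zero, cos_zero] at this
  linarith

end Real

/-- **Area of a circular segment versus projection length** (used in Lemma 4.7).
There is a constant `A₁ > 0` such that for all `θ ∈ [0, 2π]`,
`(θ − sin θ)/2 ≥ A₁ (1 − cos(θ/2))²`. -/
theorem circular_segment_area_lower_bound :
    ∃ A₁ : ℝ, 0 < A₁ ∧ ∀ θ ∈ Set.Icc (0 : ℝ) (2 * Real.pi),
      A₁ * (1 - Real.cos (θ / 2)) ^ 2 ≤ (θ - Real.sin θ) / 2 := by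
  refine ⟨1 / 2, one_half_pos, fun θ ⟨hθ₀, hθ₂π⟩ => ?_⟩
  have hsin : 0 ≤ sin (θ / 2) := sin_nonneg_of_nonneg_of_le_pi (by linarith) (by linarith)
  calc 1 / 2 * (1 - cos (θ / 2)) ^ 2
      ≤ θ / 2 - sin (θ / 2) := by
        linarith [sq_one_sub_cos_div_two_le_sub_sin (x := θ / 2) (by linarith)]
    _ ≤ θ / 2 - sin (θ / 2) * cos (θ / 2) := by
      gcongr
      exact mul_le_of_le_one_right hsin (cos_le_one _)
    _ = (θ - sin θ) / 2 := by
      rw [show sin θ = sin (2 * (θ / 2)) by ring_nf, sin_two_mul]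
      ring
end

section
/- There exists a threshold R₀ such that for all R ≥ R₀, every admissible disk D in the annulus 𝒜_R = B(0, R+1) − closure(B(0,R)) that is a Euclidean disk in ℂ has Euclidean diameter at most 5. -/
open Set MeasureTheory

noncomputable section

namespace DPG

/-! ### Conformal extremal width -/

/-- The circular rectangle `{r e^{iθ} : r ∈ (R, R+1), θ ∈ (θ₁, θ₂)}` in the annulus
`𝒜_R`. -/
def circRect (R θ₁ θ₂ : ℝ) : Set ℂ :=
  {z | ∃ r θ : ℝ, R < r ∧ r < R + 1 ∧ θ₁ < θ ∧ θ < θ₂ ∧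
    z = r * Complex.exp (θ * Complex.I)}

/-- The circular arc `{ρ e^{iθ} : θ ∈ [θ₁, θ₂]}`. -/
def circArc (ρ θ₁ θ₂ : ℝ) : Set ℂ :=
  {z | ∃ θ : ℝ, θ₁ ≤ θ ∧ θ ≤ θ₂ ∧ z = ρ * Complex.exp (θ * Complex.I)}

/-- The round annulus `𝒜_R = B(0, R+1) − closure (B(0, R))`. -/
def annulusA (R : ℝ) : Set ℂ := Metric.ball 0 (R + 1) \ Metric.closedBall 0 R

/-- The family of curves in `Ω` joining `A` to `B`: continuous curves on `[0,1]`,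
(piecewise) differentiable in the interior, with interior inside `Ω` and endpoints on `A`
and `B`. -/
def joiningCurves (Ω A B : Set ℂ) : Set (ℝ → ℂ) :=
  {α | ContinuousOn α (Icc 0 1) ∧ DifferentiableOn ℝ α (Ioo 0 1) ∧
    α '' Ioo 0 1 ⊆ Ω ∧ ((α 0 ∈ A ∧ α 1 ∈ B) ∨ (α 0 ∈ B ∧ α 1 ∈ A))}

/-- The length `∫_α ρ |dz|` of a curve with respect to a conformal metric `ρ`. -/
def curveLen (ρ : ℂ → ℝ) (α : ℝ → ℂ) : ℝ :=
  ∫ t in (0 : ℝ)..1, ρ (α t) * ‖deriv α t‖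

/-- A Borel conformal metric `ρ` is admissible for a curve family `Γ` if it is
nonnegative and gives every curve of `Γ` length at least `1`. -/
def ConfAdmissible (ρ : ℂ → ℝ) (Γ : Set (ℝ → ℂ)) : Prop :=
  Measurable ρ ∧ (∀ z, 0 ≤ ρ z) ∧ ∀ α ∈ Γ, 1 ≤ curveLen ρ α

/-- The conformal extremal width (modulus) of a curve family `Γ` in a domain `Ω`:
the infimum of `∫_Ω ρ²` over admissible metrics.  It is the reciprocal of the conformal
extremal length `EL(Γ) = sup_ρ inf_α l_ρ(α)²/area_ρ(Ω)`. -/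
def confEW (Ω : Set ℂ) (Γ : Set (ℝ → ℂ)) : ℝ :=
  sInf {A | ∃ ρ, ConfAdmissible ρ Γ ∧ A = ∫ z in Ω, ρ z ^ 2}

/-- The extremal width of a circular rectangle: the extremal width of the family of
curves joining its two horizontal boundary arcs. -/
def rectEW (R θ₁ θ₂ : ℝ) : ℝ :=
  confEW (circRect R θ₁ θ₂)
    (joiningCurves (circRect R θ₁ θ₂) (circArc R θ₁ θ₂) (circArc (R + 1) θ₁ θ₂))

/-- The extremal width of the annulus `𝒜_R`: the extremal width of the family of curves
joining its two boundary circles. -/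
def annulusEW (R : ℝ) : ℝ :=
  confEW (annulusA R)
    (joiningCurves (annulusA R) (Metric.sphere 0 R) (Metric.sphere 0 (R + 1)))

end DPG

namespace DPG

/-- The set of admissible intersection angles arising from Coxeter weights:
`{π/n : n ∈ ℕ, n ≥ 2} ∪ {0}`. -/
def coxeterAngles : Set ℝ := {ω | ω = 0 ∨ ∃ n : ℕ, 2 ≤ n ∧ ω = Real.pi / n}

/-- The disk `closedBall z₀ r` meets the inner complementary disk
`D₁ = closure (B(0,R))` of the annulus `𝒜_R`. -/
def MeetsInner (R : ℝ) (z₀ : ℂ) (r : ℝ) : Prop :=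
  (Metric.closedBall z₀ r ∩ Metric.closedBall (0 : ℂ) R).Nonempty

/-- The disk `closedBall z₀ r` meets the outer complementary disk
`D₂ = (B(0,R+1))ᶜ` of the annulus `𝒜_R`. -/
def MeetsOuter (R : ℝ) (z₀ : ℂ) (r : ℝ) : Prop :=
  (Metric.closedBall z₀ r ∩ (Metric.ball (0 : ℂ) (R + 1))ᶜ).Nonempty

/-- An admissible disk `D = closedBall z₀ r` in the annulus `𝒜_R`: it meets `𝒜_R`; for
each of the two complementary disks `D₁, D₂` of `𝒜_R`, it is either disjoint from it or
meets it at an angle `ωᵢ ∈ {π/n : n ≥ 2} ∪ {0}` (expressed by the standard algebraic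
relation between the center, the radii and the angle); and when it meets both,
`ω₁ + ω₂ < π`. -/
def IsAdmissibleDisk (R : ℝ) (z₀ : ℂ) (r : ℝ) : Prop :=
  0 < r ∧ (Metric.closedBall z₀ r ∩ annulusA R).Nonempty ∧
  ∃ ω₁ ∈ coxeterAngles, ∃ ω₂ ∈ coxeterAngles,
    (MeetsInner R z₀ r → ‖z₀‖ ^ 2 = R ^ 2 + r ^ 2 + 2 * R * r * Real.cos ω₁) ∧
    (MeetsOuter R z₀ r →
      ‖z₀‖ ^ 2 = (R + 1) ^ 2 + r ^ 2 - 2 * (R + 1) * r * Real.cos ω₂) ∧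
    (MeetsInner R z₀ r → MeetsOuter R z₀ r → ω₁ + ω₂ < Real.pi)

end DPG

open DPG

open Real

/-! A disk missing one of the boundary disks `D₁`, `D₂` still satisfies the corresponding
angle relation, as an inequality, with the tangency angle `0`. Subtracting the two relations
gives `2r (R cos ω₁ + (R + 1) cos ω₂) ≤ 2R + 1`. As `ω₁ + ω₂ < π`, one of the two Coxeter
angles is below `π/2`, hence at most `π/3`, and its cosine is at least `1/2`. So
`rR ≤ 2R + 1`, and `r ≤ 5/2` once `R ≥ 2`. -/

lemma exists_mem_closedBall_norm_eq_add {E : Type*} [NormedAddCommGroup E] [NormedSpace ℝ E]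
    [Nontrivial E] (x : E) {r : ℝ} (hr : 0 ≤ r) :
    ∃ y ∈ Metric.closedBall x r, ‖y‖ = ‖x‖ + r := by
  obtain ⟨v, hv, hxv⟩ : ∃ v : E, ‖v‖ = r ∧ SameRay ℝ x v := by
    rcases eq_or_ne x 0 with rfl | hx
    · obtain ⟨v, hv⟩ := exists_norm_eq E hr
      exact ⟨v, hv, .zero_left v⟩
    · refine ⟨(r / ‖x‖) • x, ?_, SameRay.sameRay_nonneg_smul_right x (by positivity)⟩
      rw [norm_smul_of_nonneg (by positivity), div_mul_cancel₀ r (norm_ne_zero_iff.2 hx)]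
  refine ⟨x + v, ?_, by rw [hxv.norm_add, hv]⟩
  rw [Metric.mem_closedBall, dist_eq_norm, add_sub_cancel_left, hv]

lemma norm_add_lt_of_closedBall_subset_ball {E : Type*} [NormedAddCommGroup E]
    [NormedSpace ℝ E] [Nontrivial E] {x : E} {r s : ℝ} (hr : 0 ≤ r)
    (h : Metric.closedBall x r ⊆ Metric.ball 0 s) : ‖x‖ + r < s := by
  obtain ⟨y, hy, hny⟩ := exists_mem_closedBall_norm_eq_add x hr
  simpa [hny] using h hy

namespace DPG

variable {R r ω ω₁ ω₂ : ℝ} {z₀ : ℂ}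

lemma mem_Icc_of_mem_coxeterAngles (h : ω ∈ coxeterAngles) : ω ∈ Icc 0 (π / 2) := by
  obtain rfl | ⟨n, hn, rfl⟩ := h
  · exact ⟨le_rfl, by positivity⟩
  · exact ⟨by positivity, div_le_div_of_nonneg_left pi_pos.le two_pos (by exact_mod_cast hn)⟩

lemma cos_nonneg_of_mem_coxeterAngles (h : ω ∈ coxeterAngles) : 0 ≤ cos ω :=
  let ⟨_, hω⟩ := mem_Icc_of_mem_coxeterAngles h
  cos_nonneg_of_mem_Icc ⟨by linarith [pi_pos], hω⟩

/-- Below `π/2`, a Coxeter angle is at most `π/3`. -/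
lemma half_le_cos_of_mem_coxeterAngles (h : ω ∈ coxeterAngles) (hω : ω < π / 2) :
    1 / 2 ≤ cos ω := by
  have hle : ω ≤ π / 3 := by
    obtain rfl | ⟨n, hn, rfl⟩ := h
    · positivity
    · have h2n : (2 : ℝ) < n := by
        by_contra! hn2
        have hn0 : (0 : ℝ) < n := by positivity
        exact hω.not_ge (div_le_div_of_nonneg_left pi_pos.le hn0 hn2)
      have h3n : (3 : ℝ) ≤ n := by exact_mod_cast (show 2 < n by exact_mod_cast h2n)
      exact div_le_div_of_nonneg_left pi_pos.le three_pos h3n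
  calc 1 / 2 = cos (π / 3) := cos_pi_div_three.symm
    _ ≤ cos ω := cos_le_cos_of_nonneg_of_le_pi
        (mem_Icc_of_mem_coxeterAngles h).1 (by linarith [pi_pos]) hle

lemma half_le_cos_or_half_le_cos (h₁ : ω₁ ∈ coxeterAngles) (h₂ : ω₂ ∈ coxeterAngles)
    (hsum : ω₁ + ω₂ < π) : 1 / 2 ≤ cos ω₁ ∨ 1 / 2 ≤ cos ω₂ := by
  rcases lt_or_ge ω₁ (π / 2) with hω₁ | hω₁
  · exact .inl (half_le_cos_of_mem_coxeterAngles h₁ hω₁)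
  · exact .inr (half_le_cos_of_mem_coxeterAngles h₂ (by linarith))

lemma mul_le_two_mul_add_one_of_cos_le (hR : 0 ≤ R) (hr : 0 ≤ r)
    (h₁ : ω₁ ∈ coxeterAngles) (h₂ : ω₂ ∈ coxeterAngles) (hsum : ω₁ + ω₂ < π)
    (h : R ^ 2 + 2 * R * r * cos ω₁ ≤ (R + 1) ^ 2 - 2 * (R + 1) * r * cos ω₂) :
    r * R ≤ 2 * R + 1 := by
  have hRr : 0 ≤ R * r := mul_nonneg hR hr
  have hR₁r : 0 ≤ (R + 1) * r := mul_nonneg (by linarith) hr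
  have c₁ := mul_nonneg hRr (cos_nonneg_of_mem_coxeterAngles h₁)
  have c₂ := mul_nonneg hR₁r (cos_nonneg_of_mem_coxeterAngles h₂)
  rcases half_le_cos_or_half_le_cos h₁ h₂ hsum with hc | hc
  · nlinarith [mul_le_mul_of_nonneg_left hc hRr]
  · nlinarith [mul_le_mul_of_nonneg_left hc hR₁r]

lemma add_lt_norm_of_not_meetsInner (hR : 0 ≤ R) (hr : 0 ≤ r) (h : ¬ MeetsInner R z₀ r) :
    R + r < ‖z₀‖ := by
  rw [MeetsInner, ← not_disjoint_iff_nonempty_inter, not_not,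
    disjoint_closedBall_closedBall_iff hr hR, dist_zero_right] at h
  linarith

lemma norm_add_lt_of_not_meetsOuter (hr : 0 ≤ r) (h : ¬ MeetsOuter R z₀ r) :
    ‖z₀‖ + r < R + 1 :=
  norm_add_lt_of_closedBall_subset_ball hr (not_not.1 (inter_compl_nonempty_iff.not.1 h))

lemma IsAdmissibleDisk.exists_cos_le (hR : 0 ≤ R) (hD : IsAdmissibleDisk R z₀ r) :
    ∃ ω₁ ∈ coxeterAngles, ∃ ω₂ ∈ coxeterAngles, ω₁ + ω₂ < π ∧
      R ^ 2 + 2 * R * r * cos ω₁ ≤ (R + 1) ^ 2 - 2 * (R + 1) * r * cos ω₂ := by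
  obtain ⟨hr, -, ω₁, hω₁, ω₂, hω₂, h₁, h₂, h₁₂⟩ := hD
  have hω₁π := (mem_Icc_of_mem_coxeterAngles hω₁).2
  have hω₂π := (mem_Icc_of_mem_coxeterAngles hω₂).2
  have h₀ : (0 : ℝ) ∈ coxeterAngles := .inl rfl
  have hz := norm_nonneg z₀
  by_cases hin : MeetsInner R z₀ r <;> by_cases hout : MeetsOuter R z₀ r
  · exact ⟨ω₁, hω₁, ω₂, hω₂, h₁₂ hin hout, by linarith [h₁ hin, h₂ hout]⟩
  · have hlt := norm_add_lt_of_not_meetsOuter hr.le hout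
    refine ⟨ω₁, hω₁, 0, h₀, by linarith [pi_pos], ?_⟩
    rw [cos_zero]
    nlinarith [h₁ hin]
  · have hlt := add_lt_norm_of_not_meetsInner hR hr.le hin
    refine ⟨0, h₀, ω₂, hω₂, by linarith [pi_pos], ?_⟩
    rw [cos_zero]
    nlinarith [h₂ hout]
  · have hlt₁ := add_lt_norm_of_not_meetsInner hR hr.le hin
    have hlt₂ := norm_add_lt_of_not_meetsOuter hr.le hout
    refine ⟨0, h₀, 0, h₀, by linarith [pi_pos], ?_⟩
    rw [cos_zero]
    nlinarith

end DPG

/-- **Uniform diameter bound for admissible disks** (Lemma 4.6).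
There is a threshold `R₀` such that for all `R ≥ R₀`, every admissible disk in the
annulus `𝒜_R = B(0, R+1) − closure(B(0,R))` which is a Euclidean disk in `ℂ` has
Euclidean diameter at most `5`. -/
theorem admissible_disk_diam_le_five :
    ∃ R₀ : ℝ, ∀ R : ℝ, R₀ ≤ R → ∀ (z₀ : ℂ) (r : ℝ), IsAdmissibleDisk R z₀ r →
      Metric.diam (Metric.closedBall z₀ r) ≤ 5 := by
  refine ⟨2, fun R hR z₀ r hD => ?_⟩
  obtain ⟨ω₁, hω₁, ω₂, hω₂, hsum, h⟩ := hD.exists_cos_le (by linarith)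
  have hr : 0 ≤ r := hD.1.le
  have hrR := mul_le_two_mul_add_one_of_cos_le (by linarith) hr hω₁ hω₂ hsum h
  calc Metric.diam (Metric.closedBall z₀ r) ≤ 2 * r := Metric.diam_closedBall hr
    _ ≤ 5 := by nlinarith
end
end
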